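/- Let h(t) = ∑_j h_j t^j be a real polynomial and let r ≥ 1 and d ≥ 0 be integers. For n ≥ 0 define a_n := ∑_j h_j·C(d+n-j, d), where C(m, d) := 0 whenever m < d, so that ∑_{n≥0} a_n t^n = h(t)/(1-t)^{d+1}. Then the polynomial g(t) := (h(t)·(1+t+⋯+t^{r-1})^{d+1})^{⟨r,0⟩} satisfies ∑_j g_j·C(d+n-j, d) = a_{rn} for all integers n ≥ 0, where g_j denotes the j-th coefficient of g. -/

import Mathlib

open Polynomial

/-- The geometric polynomial `1 + t + ⋯ + t^{r-1}`. -/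
noncomputable def geomPoly (r : ℕ) : ℝ[X] := ∑ j ∈ Finset.range r, X ^ j

/-- `sect r i f` is the polynomial `f^{⟨r,i⟩}` whose `n`-th coefficient is the `(r*n+i)`-th
coefficient of `f` (valid definition for `r ≥ 1`). -/
noncomputable def sect (r i : ℕ) (f : ℝ[X]) : ℝ[X] :=
  ∑ n ∈ Finset.range (f.natDegree + 1), C (f.coeff (r * n + i)) * X ^ n

/-- The operator `U_r^D h = (h·(1+t+⋯+t^{r-1})^D)^{⟨r,0⟩}`. -/
noncomputable def Uop (r D : ℕ) (h : ℝ[X]) : ℝ[X] := sect r 0 (h * geomPoly r ^ D)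

/-- `(p, q)` is the symmetric decomposition of `h` with respect to `d`. -/
def IsSymmDecomp (d : ℕ) (h p q : ℝ[X]) : Prop :=
  h = p + X * q ∧
  p.natDegree ≤ d ∧ (∀ i ≤ d, p.coeff i = p.coeff (d - i)) ∧
  q.natDegree ≤ d - 1 ∧ (∀ i ≤ d - 1, q.coeff i = q.coeff (d - 1 - i))

/-- A real polynomial is real-rooted if it is zero or all of its complex roots are real. -/
def RealRooted (f : ℝ[X]) : Prop :=
  f = 0 ∨ ∀ z : ℂ, aeval z f = 0 → z.im = 0

/-- The real roots of `f`, with multiplicity, in weakly decreasing order. -/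
noncomputable def descRoots (f : ℝ[X]) : List ℝ := (f.roots.sort (· ≤ ·)).reverse

/-- `Interlaces f g` means `f ⪯ g`: both are real-rooted and, unless one of them is zero,
the decreasingly ordered root lists `s` of `f` and `t` of `g` satisfy
`⋯ ≤ s_2 ≤ t_2 ≤ s_1 ≤ t_1` (with `deg g = deg f` or `deg f + 1`). -/
def Interlaces (f g : ℝ[X]) : Prop :=
  RealRooted f ∧ RealRooted g ∧
  (f = 0 ∨ g = 0 ∨
    (((descRoots g).length = (descRoots f).length ∨
      (descRoots g).length = (descRoots f).length + 1) ∧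
     (∀ i, (hf : i < (descRoots f).length) → (hg : i < (descRoots g).length) →
        (descRoots f).get ⟨i, hf⟩ ≤ (descRoots g).get ⟨i, hg⟩) ∧
     (∀ i, (hg : i + 1 < (descRoots g).length) → (hf : i < (descRoots f).length) →
        (descRoots g).get ⟨i + 1, hg⟩ ≤ (descRoots f).get ⟨i, hf⟩)))

/-- The coefficient of `h` at an integer index, zero for negative indices. -/
noncomputable def coeffZ (h : ℝ[X]) (j : ℤ) : ℝ := if 0 ≤ j then h.coeff j.toNat else 0

/-- Property (H): `h_0 + ⋯ + h_i ≥ h_d + h_{d-1} + ⋯ + h_{d-i+1}` for all `i`. -/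
def PropH (d : ℕ) (h : ℝ[X]) : Prop :=
  ∀ i : ℕ, ∑ j ∈ Finset.range i, coeffZ h ((d : ℤ) - j) ≤ ∑ j ∈ Finset.range (i + 1), h.coeff j

/-- Property (S): `h_0 + ⋯ + h_i ≤ h_s + h_{s-1} + ⋯ + h_{s-i}` for all `i`. -/
def PropS (s : ℕ) (h : ℝ[X]) : Prop :=
  ∀ i : ℕ, ∑ j ∈ Finset.range (i + 1), h.coeff j ≤ ∑ j ∈ Finset.range (i + 1), coeffZ h ((s : ℤ) - j)

/-- The binomial coefficient `C(m, k)` for an integer `m`, which is `0` whenever `m < k`. -/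
noncomputable def chooseZ (m : ℤ) (k : ℕ) : ℝ :=
  if m < (k : ℤ) then 0 else (m.toNat.choose k : ℝ)

/-! With `G = 1 + t + ⋯ + t^{r-1}`, the generating function of `a` is
`h / (1 - t)^{d+1} = h G^{d+1} / (1 - t^r)^{d+1}`, and `1 / (1 - t^r)^{d+1}` is a series in `t^r`.
Taking the coefficients of index divisible by `r` commutes with multiplication by a series in
`t^r`, so `∑ a_{rn} tⁿ = (h G^{d+1})^{⟨r,0⟩} / (1 - t)^{d+1}`. -/

lemma coeff_sect {r : ℕ} (hr : 0 < r) (i : ℕ) (f : ℝ[X]) (n : ℕ) :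
    (sect r i f).coeff n = f.coeff (r * n + i) := by
  simp only [sect, finsetSum_coeff, coeff_C_mul, coeff_X_pow, mul_ite, mul_one, mul_zero]
  rw [Finset.sum_ite_eq, ite_eq_left_iff, Finset.mem_range, not_lt, eq_comm]
  intro hn
  exact coeff_eq_zero_of_natDegree_lt (by nlinarith)

namespace PowerSeries

lemma coeff_coe_mul_expand {r : ℕ} (hr : r ≠ 0) (f : ℝ[X]) (φ : ℝ⟦X⟧) (n : ℕ) :
    coeff (r * n) ((f : ℝ⟦X⟧) * expand r hr φ) = coeff n ((sect r 0 f : ℝ⟦X⟧) * φ) := by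
  rw [coeff_mul, coeff_mul, eq_comm]
  refine Finset.sum_of_injOn (fun p => (r * p.1, r * p.2)) ?_ ?_ ?_ ?_
  · intro p _ q _ hpq
    simpa [Prod.ext_iff, hr] using hpq
  · intro p hp
    rw [Finset.mem_coe, Finset.HasAntidiagonal.mem_antidiagonal] at hp ⊢
    rw [← mul_add, hp]
  · rintro ⟨i, j⟩ hij hnot
    rw [Finset.HasAntidiagonal.mem_antidiagonal] at hij
    suffices ¬ r ∣ j by rw [coeff_expand_of_not_dvd r hr φ this, mul_zero]
    rintro ⟨k, rfl⟩
    obtain ⟨m, rfl⟩ : r ∣ i := (Nat.dvd_add_left (dvd_mul_right r k)).mp (hij ▸ dvd_mul_right r n)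
    refine hnot ⟨(m, k), ?_, rfl⟩
    simpa [← mul_add, hr] using hij
  · rintro ⟨i, j⟩ -
    simp only [Polynomial.coeff_coe, coeff_sect (Nat.pos_of_ne_zero hr), add_zero,
      coeff_expand_mul]

lemma one_sub_X_mul_geomPoly (r : ℕ) : (1 - X : ℝ⟦X⟧) * (geomPoly r : ℝ⟦X⟧) = 1 - X ^ r := by
  simpa [geomPoly] using congrArg (Polynomial.coeToPowerSeries.ringHom (R := ℝ))
    (mul_neg_geom_sum (Polynomial.X : ℝ[X]) r)

lemma one_sub_X_pow_pow_mul_expand_invOneSubPow {R : Type*} [CommRing R] {r : ℕ} (hr : r ≠ 0)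
    (d : ℕ) : (1 - X ^ r : R⟦X⟧) ^ d * expand r hr (invOneSubPow R d : R⟦X⟧) = 1 := by
  have := congrArg (expand r hr) (invOneSubPow R d).inv_val
  rw [map_mul, map_one, invOneSubPow_inv_eq_one_sub_pow] at this
  simpa using this

lemma coe_mul_invOneSubPow {r : ℕ} (hr : r ≠ 0) (d : ℕ) (h : ℝ[X]) :
    (h : ℝ⟦X⟧) * (invOneSubPow ℝ d : ℝ⟦X⟧) =
      ((h * geomPoly r ^ d : ℝ[X]) : ℝ⟦X⟧) * expand r hr (invOneSubPow ℝ d : ℝ⟦X⟧) := by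
  have hB := one_sub_X_pow_pow_mul_expand_invOneSubPow (R := ℝ) hr d
  rw [← one_sub_X_mul_geomPoly, mul_pow] at hB
  have hA : (invOneSubPow ℝ d : ℝ⟦X⟧) * (1 - X) ^ d = 1 := by
    rw [← invOneSubPow_inv_eq_one_sub_pow]
    exact (invOneSubPow ℝ d).val_inv
  push_cast
  linear_combination (-(h : ℝ⟦X⟧) * (invOneSubPow ℝ d : ℝ⟦X⟧)) * hB
    + ((h : ℝ⟦X⟧) * (geomPoly r : ℝ⟦X⟧) ^ d * expand r hr (invOneSubPow ℝ d : ℝ⟦X⟧)) * hA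

lemma sum_coeff_mul_chooseZ (p : ℝ[X]) (d n : ℕ) :
    ∑ j ∈ Finset.range (p.natDegree + 1), p.coeff j * chooseZ ((d : ℤ) + n - j) d =
      coeff n ((p : ℝ⟦X⟧) * (invOneSubPow ℝ (d + 1) : ℝ⟦X⟧)) := by
  rw [coeff_mul, Finset.Nat.sum_antidiagonal_eq_sum_range_succ_mk]
  simp only [Polynomial.coeff_coe, invOneSubPow_val_succ_eq_mk_add_choose, coeff_mk]
  have hvanish : ∀ j, p.natDegree < j ∨ n < j →
      p.coeff j * chooseZ ((d : ℤ) + n - j) d = 0 := by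
    rintro j (hdeg | hn)
    · rw [coeff_eq_zero_of_natDegree_lt hdeg, zero_mul]
    · rw [chooseZ, if_pos (by omega), mul_zero]
  calc _ = ∑ j ∈ Finset.range (min (p.natDegree + 1) (n + 1)),
        p.coeff j * chooseZ ((d : ℤ) + n - j) d :=
      (Finset.sum_subset (Finset.range_subset_range.2 (min_le_left _ _))
        fun j _ hj => hvanish j (by rw [Finset.mem_range] at hj; omega)).symm
    _ = ∑ j ∈ Finset.range (n + 1), p.coeff j * chooseZ ((d : ℤ) + n - j) d :=
      Finset.sum_subset (Finset.range_subset_range.2 (min_le_right _ _))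
        fun j _ hj => hvanish j (by rw [Finset.mem_range] at hj; omega)
    _ = _ := Finset.sum_congr rfl fun j hj => by
      rw [Finset.mem_range] at hj
      rw [chooseZ, if_neg (by omega), show ((d : ℤ) + n - j).toNat = d + (n - j) by omega]

end PowerSeries

/-- (Defining property of `U_r^{d+1}`.) Let `a_n = ∑_j h_j·C(d+n-j, d)`,
so that `∑_{n≥0} a_n tⁿ = h(t)/(1-t)^{d+1}`. Then `g = U_r^{d+1} h` satisfies
`∑_j g_j·C(d+n-j, d) = a_{rn}` for all `n ≥ 0`. -/
theorem statement18 (h : ℝ[X]) (r d : ℕ) (hr : 1 ≤ r) :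
    ∀ n : ℕ,
      ∑ j ∈ Finset.range ((Uop r (d + 1) h).natDegree + 1),
          (Uop r (d + 1) h).coeff j * chooseZ ((d : ℤ) + n - j) d =
        ∑ j ∈ Finset.range (h.natDegree + 1),
          h.coeff j * chooseZ ((d : ℤ) + (r * n : ℕ) - j) d := by
  intro n
  have hr0 : r ≠ 0 := Nat.one_le_iff_ne_zero.mp hr
  rw [PowerSeries.sum_coeff_mul_chooseZ, PowerSeries.sum_coeff_mul_chooseZ,
    PowerSeries.coe_mul_invOneSubPow hr0 (d + 1) h, PowerSeries.coeff_coe_mul_expand, Uop]
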